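/- Let P be a set with an atomic partial product and M(P) the associated presented monoid. If a word (x₁, …, xₙ) in elements of P is equivalent in M(P) to a single-letter word (y), then the product x₁⋯xₙ is defined in P (for some, hence any, bracketing) and equals y. -/

import Mathlib

/-- An atomic partial product on a set `P`: a partial product (with values in
`Option P`) with a unit, associativity, a finite set of atoms, and an `ℕ`-grading. -/
structure AtomicPartialProduct (P : Type*) where
  mul : P → P → Option P
  one : P
  one_mul : ∀ a, mul one a = some a
  mul_one : ∀ a, mul a one = some a
  /-- `ab` and `(ab)c` are defined iff `bc` and `a(bc)` are defined. -/
  assoc_defined : ∀ a b c : P,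
    (∃ ab, mul a b = some ab ∧ (mul ab c).isSome) ↔
    (∃ bc, mul b c = some bc ∧ (mul a bc).isSome)
  /-- When both are defined, `(ab)c = a(bc)`. -/
  assoc : ∀ a b c ab bc x y : P, mul a b = some ab → mul b c = some bc →
    mul ab c = some x → mul a bc = some y → x = y
  /-- The product of two non-unit elements is a non-unit. -/
  ne_one_mul : ∀ a b c : P, a ≠ one → b ≠ one → mul a b = some c → c ≠ one
  /-- There are finitely many atoms. -/
  atoms_finite : {p : P | p ≠ one ∧ ∀ a b, a ≠ one → b ≠ one → mul a b ≠ some p}.Finite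
  len : P → ℕ
  len_pos : ∀ p, p ≠ one → 0 < len p
  len_mul : ∀ a b c, mul a b = some c → len c = len a + len b

namespace AtomicPartialProduct

variable {P : Type*} (S : AtomicPartialProduct P)

/-- The set of atoms: non-unit elements which are not products of non-units. -/
def atoms : Set P :=
  {p : P | p ≠ S.one ∧ ∀ a b, a ≠ S.one → b ≠ S.one → S.mul a b ≠ some p}

/-- The defining relations of the monoid `M(P)`: `a · b = c` whenever the partial
product `ab` is defined and equal to `c`. -/
def rel : FreeMonoid P → FreeMonoid P → Prop := fun u v =>
  ∃ a b c : P, S.mul a b = some c ∧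
    u = FreeMonoid.of a * FreeMonoid.of b ∧ v = FreeMonoid.of c

/-- The monoid `M(P)` presented by generators `P` and relations `ab = c` whenever
the partial product is defined. -/
def M := (conGen S.rel).Quotient

instance : Monoid S.M := inferInstanceAs (Monoid (conGen S.rel).Quotient)

/-- The natural map `P → M(P)`. -/
def ι (p : P) : S.M := (conGen S.rel).mk' (FreeMonoid.of p)

/-- `a` left-divides `c` in `P`. -/
def leftDvd (a c : P) : Prop := ∃ b, S.mul a b = some c

/-- `a` right-divides `c` in `P`. -/
def rightDvd (a c : P) : Prop := ∃ b, S.mul b a = some c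

/-- `Δ` is a least common right multiple of `s` and `t` in `P`. -/
def IsRightLcm (s t Δ : P) : Prop :=
  S.leftDvd s Δ ∧ S.leftDvd t Δ ∧ ∀ m, S.leftDvd s m → S.leftDvd t m → S.leftDvd Δ m

/-- `Δ` is a least common left multiple of `s` and `t` in `P`. -/
def IsLeftLcm (s t Δ : P) : Prop :=
  S.rightDvd s Δ ∧ S.rightDvd t Δ ∧ ∀ m, S.rightDvd s m → S.rightDvd t m → S.rightDvd Δ m

end AtomicPartialProduct

/-- A pre-Garside structure: an atomic partial product satisfying the lcm axioms
(iv), (iv'), the closure axiom (v) and the cancellativity axiom (vi). -/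
structure PreGarside (P : Type*) extends AtomicPartialProduct P where
  /-- (iv) two atoms with a common right multiple have a right lcm. -/
  lcm_right : ∀ s ∈ toAtomicPartialProduct.atoms, ∀ t ∈ toAtomicPartialProduct.atoms,
    (∃ m, toAtomicPartialProduct.leftDvd s m ∧ toAtomicPartialProduct.leftDvd t m) →
    ∃ Δ, toAtomicPartialProduct.IsRightLcm s t Δ
  /-- (iv') two atoms with a common left multiple have a left lcm. -/
  lcm_left : ∀ s ∈ toAtomicPartialProduct.atoms, ∀ t ∈ toAtomicPartialProduct.atoms,
    (∃ m, toAtomicPartialProduct.rightDvd s m ∧ toAtomicPartialProduct.rightDvd t m) →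
    ∃ Δ, toAtomicPartialProduct.IsLeftLcm s t Δ
  /-- (v) if `as` and `at` are defined then so is `aΔ_{s,t}`. -/
  mul_lcm_defined : ∀ s ∈ toAtomicPartialProduct.atoms, ∀ t ∈ toAtomicPartialProduct.atoms,
    ∀ Δ a : P, toAtomicPartialProduct.IsRightLcm s t Δ →
    (toAtomicPartialProduct.mul a s).isSome → (toAtomicPartialProduct.mul a t).isSome →
    (toAtomicPartialProduct.mul a Δ).isSome
  /-- (vi) elements of `P` are cancellable in `M(P)` (right cancellation). -/
  cancel_right : ∀ (m : toAtomicPartialProduct.M) (a b : P),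
    toAtomicPartialProduct.ι a * m = toAtomicPartialProduct.ι b * m → a = b
  /-- (vi) elements of `P` are cancellable in `M(P)` (left cancellation). -/
  cancel_left : ∀ (m : toAtomicPartialProduct.M) (a b : P),
    m * toAtomicPartialProduct.ι a = m * toAtomicPartialProduct.ι b → a = b

namespace AtomicPartialProduct

/-- Iterated (left-bracketed) partial product of `a` with a list of elements of `P`. -/
def foldProd {P : Type*} (S : AtomicPartialProduct P) : P → List P → Option P
  | a, [] => some a
  | a, b :: t => (S.mul a b).bind fun ab => S.foldProd ab t

variable {P : Type*} (S : AtomicPartialProduct P)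

theorem bind_foldProd (l : List P) : ∀ a b : P,
    (S.mul a b).bind (fun ab => S.foldProd ab l) = (S.foldProd b l).bind (S.mul a) := by
  induction l with
  | nil =>
    intro a b
    cases h : S.mul a b <;> simp [foldProd, h]
  | cons c t ih =>
    intro a b
    show (S.mul a b).bind (fun ab => (S.mul ab c).bind fun x => S.foldProd x t)
       = ((S.mul b c).bind fun bc => S.foldProd bc t).bind (S.mul a)
    cases hab : S.mul a b with
    | none =>
      cases hbc : S.mul b c with
      | none => simp
      | some bc =>
        simp only [Option.bind_none, Option.bind_some]
        rw [← ih a bc]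
        cases habc : S.mul a bc with
        | none => simp [habc]
        | some y =>
          exfalso
          obtain ⟨ab, hab', _⟩ := (S.assoc_defined a b c).mpr
            ⟨bc, hbc, by simp [habc]⟩
          simp [hab'] at hab
    | some ab =>
      simp only [Option.bind_some]
      cases habc : S.mul ab c with
      | none =>
        cases hbc : S.mul b c with
        | none => simp
        | some bc =>
          simp only [Option.bind_none, Option.bind_some]
          rw [← ih a bc]
          cases habc2 : S.mul a bc with
          | none => simp [habc2]
          | some y =>
            exfalso
            obtain ⟨ab', hab', hsome⟩ := (S.assoc_defined a b c).mpr
              ⟨bc, hbc, by simp [habc2]⟩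
            rw [hab] at hab'
            cases hab'
            simp [habc] at hsome
      | some x =>
        obtain ⟨bc, hbc, hsome⟩ := (S.assoc_defined a b c).mp
          ⟨ab, hab, by simp [habc]⟩
        obtain ⟨y, habc2⟩ := Option.isSome_iff_exists.mp hsome
        have hxy : x = y := S.assoc a b c ab bc x y hab hbc habc habc2
        rw [hbc]
        simp only [Option.bind_some]
        rw [← ih a bc, habc2, hxy]
        simp

theorem foldProd_eq_bind (l : List P) (c : P) :
    S.foldProd c l = (S.foldProd S.one l).bind (S.mul c) := by
  have := S.bind_foldProd l c S.one
  rw [S.mul_one c] at this; exact this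

/-- The congruence given by equality of (partial) products. -/
def prodCon : Con (FreeMonoid P) where
  r u v := S.foldProd S.one (FreeMonoid.toList u) = S.foldProd S.one (FreeMonoid.toList v)
  iseqv := ⟨fun _ => rfl, Eq.symm, Eq.trans⟩
  mul' := by
    intro u v u' v' h1 h2
    have key : ∀ w w' : FreeMonoid P, S.foldProd S.one (FreeMonoid.toList (w * w')) =
        (S.foldProd S.one (FreeMonoid.toList w)).bind fun a =>
          (S.foldProd S.one (FreeMonoid.toList w')).bind (S.mul a) := by
      intro w w'
      rw [FreeMonoid.toList_mul]
      have happ : ∀ (a : P) (l1 l2 : List P),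
          S.foldProd a (l1 ++ l2) = (S.foldProd a l1).bind fun c => S.foldProd c l2 := by
        intro a l1
        induction l1 generalizing a with
        | nil => simp [foldProd]
        | cons b t ih =>
          intro l2
          show (S.mul a b).bind (fun ab => S.foldProd ab (t ++ l2)) = _
          cases h : S.mul a b <;> simp [foldProd, h, ih]
      rw [happ]
      congr 1
      funext c
      exact S.foldProd_eq_bind _ c
    show S.foldProd S.one (FreeMonoid.toList (u * u')) =
      S.foldProd S.one (FreeMonoid.toList (v * v'))
    rw [key, key, h1, h2]

end AtomicPartialProduct

/-- If a word `(x₁, …, xₙ)` in elements of `P` is equivalent in `M(P)` to a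
single-letter word `(y)`, then the product `x₁ ⋯ xₙ` is defined in `P` and equals `y`. -/
theorem prod_defined_of_rel_single {P : Type*} (S : AtomicPartialProduct P)
    (x : P) (l : List P) (y : P)
    (h : conGen S.rel (FreeMonoid.ofList (x :: l)) (FreeMonoid.of y)) :
    S.foldProd x l = some y := by
  have hle : conGen S.rel ≤ S.prodCon := by
    apply Con.conGen_le.mpr
    rintro u v ⟨a, b, c, hab, rfl, rfl⟩
    show S.foldProd S.one (FreeMonoid.toList (FreeMonoid.of a * FreeMonoid.of b)) =
      S.foldProd S.one (FreeMonoid.toList (FreeMonoid.of c))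
    simp only [FreeMonoid.toList_mul, FreeMonoid.toList_of]
    show S.foldProd S.one [a, b] = S.foldProd S.one [c]
    simp [AtomicPartialProduct.foldProd, S.one_mul, hab]
  have h' := Con.le_def.mp hle h
  have hxl : S.foldProd S.one (FreeMonoid.toList (FreeMonoid.ofList (x :: l))) =
      S.foldProd x l := by
    show S.foldProd S.one (x :: l) = S.foldProd x l
    show (S.mul S.one x).bind (fun ab => S.foldProd ab l) = _
    rw [S.one_mul x, Option.bind_some]
  have hy : S.foldProd S.one (FreeMonoid.toList (FreeMonoid.of y)) = some y := by
    show S.foldProd S.one [y] = some y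
    show (S.mul S.one y).bind (fun ab => S.foldProd ab []) = some y
    rw [S.one_mul y]; rfl
  rw [← hxl, h', hy]
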